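/- Under the same nilpotency hypotheses, the derivative of the inverse exponential satisfies d/dt e^{-X(t)} = -\mathcal{O}_{X(t)}(dX/dt) \cdot e^{-X(t)}. -/

import Mathlib

/-!
Moving `Y` to the right past `ad_Y^i(Y')` via `Y Z = ad_Y(Z) + Z Y` gives
`d(Y^(n+1)) = ∑_{i+j=n} C(n+1, i+1) ad_Y^i(Y') Y^j`, and `C(n+1, i+1)/(n+1)! = 1/((i+1)! j!)`.
Hence `d e^Y` is the Cauchy product of `∑ ad_Y^i(Y')/(i+1)!` with `e^Y`, except that the
truncations at `m` (resp. `2m`) drop or add terms `ad_Y^i(Y') Y^j` with `i + j + 1 ≥ m`. These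
have coefficients in the `(i+j+1)`-st power of the nilpotent algebra `S`, so they vanish. The
theorem is the case `Y = -X`, where `ad_{-X}^k(-X') = -(-1)^k ad_X^k(X')`.
-/

open Polynomial Finset
open scoped Nat

/-- Iterated commutator `ad_X^k(Y)`. -/
def adPow {B : Type*} [Mul B] [Sub B] (X : B) : ℕ → B → B
  | 0, Y => Y
  | k + 1, Y => X * adPow X k Y - adPow X k Y * X

section adPow
variable {B : Type*} [Ring B]

theorem mul_adPow (X Y : B) (k : ℕ) : X * adPow X k Y = adPow X (k + 1) Y + adPow X k Y * X := by
  rw [adPow, sub_add_cancel]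

theorem adPow_neg_right (X Y : B) (k : ℕ) : adPow X k (-Y) = -adPow X k Y := by
  induction k with
  | zero => rfl
  | succ k ih => simp only [adPow, ih, mul_neg, neg_mul, neg_sub_neg, neg_sub]

variable {R : Type*} [CommRing R] [Algebra R B] {P : Submodule R B}

theorem adPow_neg_left (X Y : B) (k : ℕ) : adPow (-X) k Y = (-1 : R) ^ k • adPow X k Y := by
  induction k with
  | zero => simp [adPow]
  | succ k ih => simp [adPow, ih, pow_succ, smul_sub]

theorem adPow_mem_pow {X Y : B} (hX : X ∈ P) (hY : Y ∈ P) (k : ℕ) :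
    adPow X k Y ∈ P ^ (k + 1) := by
  induction k with
  | zero => simpa [adPow] using hY
  | succ k ih =>
    refine sub_mem ?_ ?_
    · rw [pow_succ']
      exact Submodule.mul_mem_mul hX ih
    · rw [pow_succ]
      exact Submodule.mul_mem_mul ih hX

theorem adPow_mul_pow_eq_zero {m : ℕ} (hP : P ^ m = ⊥) {X Y : B} (hX : X ∈ P) (hY : Y ∈ P)
    {i j : ℕ} (hij : m ≤ i + j + 1) : adPow X i Y * X ^ j = 0 := by
  have hmem : adPow X i Y * X ^ j ∈ P ^ (i + 1 + j) := by
    rw [pow_add]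
    exact Submodule.mul_mem_mul (adPow_mem_pow hX hY i) (Submodule.pow_mem_pow P hX j)
  rw [← Submodule.zero_eq_bot] at hP
  rwa [pow_eq_zero_of_le (by omega) hP, Submodule.zero_eq_bot, Submodule.mem_bot] at hmem

end adPow

theorem Submodule.pow_eq_bot_of_list_prod {R A : Type*} [CommSemiring R] [Semiring A]
    [Algebra R A] {M : Submodule R A} {m : ℕ}
    (h : ∀ l : List A, (∀ a ∈ l, a ∈ M) → l.length = m → l.prod = 0) : M ^ m = ⊥ := by
  rw [Submodule.pow_eq_span_pow_set, Submodule.span_eq_bot]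
  intro x hx
  obtain ⟨f, rfl⟩ := Set.mem_pow.mp hx
  exact h _ (by simp) (by simp)

theorem Finset.sum_range_sum_antidiagonal_eq_sum_range_sum_range {M : Type*} [AddCommMonoid M]
    {m N : ℕ} (f : ℕ → ℕ → M) (hmN : m ≤ N) (hf : ∀ i j, m ≤ i + j → f i j = 0) :
    ∑ n ∈ range m, ∑ p ∈ antidiagonal n, f p.1 p.2 = ∑ i ∈ range N, ∑ j ∈ range m, f i j := by
  simp_rw [Nat.sum_antidiagonal_eq_sum_range_succ f, sum_range_diag_flip]
  calc ∑ i ∈ range m, ∑ j ∈ range (m - i), f i j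
      = ∑ i ∈ range m, ∑ j ∈ range m, f i j :=
        sum_congr rfl fun i hi => sum_subset (range_subset_range.mpr (Nat.sub_le m i))
          fun j _ hj => hf i j (by simp only [mem_range] at hi hj; omega)
    _ = ∑ i ∈ range N, ∑ j ∈ range m, f i j :=
        sum_subset (range_subset_range.mpr hmN) fun i _ hi =>
          sum_eq_zero fun j _ => hf i j (by simp only [mem_range] at hi; omega)

namespace Polynomial

section coeffsIn
variable {R A : Type*} [CommSemiring R] [Semiring A]

section Module
variable [Module R A] {M : Submodule R A}

variable (A) in
def coeffsIn (M : Submodule R A) : Submodule R A[X] where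
  carrier := {p | ∀ n, p.coeff n ∈ M}
  add_mem' hp hq n := by simpa using add_mem (hp n) (hq n)
  zero_mem' := by simp
  smul_mem' r p hp n := by simpa using Submodule.smul_mem _ r (hp n)

theorem mem_coeffsIn {p : A[X]} : p ∈ coeffsIn A M ↔ ∀ n, p.coeff n ∈ M := Iff.rfl

theorem coeffsIn_bot : coeffsIn A (⊥ : Submodule R A) = ⊥ := by
  ext p
  simp [mem_coeffsIn, Polynomial.ext_iff]

theorem derivative_mem_coeffsIn {p : A[X]} (hp : p ∈ coeffsIn A M) :
    derivative p ∈ coeffsIn A M := fun n => by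
  rw [coeff_derivative, ← Nat.cast_succ, ← nsmul_eq_mul']
  exact nsmul_mem (hp (n + 1)) _

end Module

variable [Algebra R A] {M N : Submodule R A}

theorem coeffsIn_mul_le : coeffsIn A M * coeffsIn A N ≤ coeffsIn A (M * N) :=
  Submodule.mul_le.mpr fun _ hp _ hq n => by
    rw [coeff_mul]
    exact Submodule.sum_mem _ fun x _ => Submodule.mul_mem_mul (hp x.1) (hq x.2)

theorem coeffsIn_pow_le (n : ℕ) : coeffsIn A M ^ n ≤ coeffsIn A (M ^ n) := by
  induction n with
  | zero =>
    rw [pow_zero, pow_zero, Submodule.one_le]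
    intro n
    rw [coeff_one]
    split_ifs
    · exact Submodule.one_le.mp le_rfl
    · exact zero_mem _
  | succ n ih =>
    rw [pow_succ, pow_succ]
    exact (mul_le_mul_left ih _).trans coeffsIn_mul_le

end coeffsIn

theorem derivative_pow_succ_eq_sum_adPow {A : Type*} [Ring A] (Y : A[X]) (n : ℕ) :
    derivative (Y ^ (n + 1)) = ∑ p ∈ antidiagonal n,
      (n + 1).choose (p.1 + 1) • (adPow Y p.1 (derivative Y) * Y ^ p.2) := by
  induction n with
  | zero => simp [adPow]
  | succ n ih =>
    rw [pow_succ', derivative_mul, ih, mul_sum]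
    simp_rw [Nat.choose_succ_succ (n + 1), add_smul, sum_add_distrib]
    rw [Nat.sum_antidiagonal_succ, Nat.sum_antidiagonal_succ']
    simp only [mul_smul_comm, ← mul_assoc, mul_adPow, add_mul, smul_add, sum_add_distrib]
    simp [adPow, mul_assoc, ← pow_succ', add_assoc]

end Polynomial

def truncExp {B : Type*} [Ring B] [Algebra ℚ B] (m : ℕ) (Y : B) : B :=
  ∑ k ∈ range m, ((k ! : ℚ))⁻¹ • Y ^ k

namespace Polynomial
variable {A : Type*} [Ring A] [Algebra ℚ A]

theorem derivative_smul_pow_succ_eq_sum (Y : A[X]) (n : ℕ) :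
    derivative (((n + 1)! : ℚ)⁻¹ • Y ^ (n + 1)) = ∑ p ∈ antidiagonal n,
      (((p.1 + 1)! : ℚ)⁻¹ • adPow Y p.1 (derivative Y)) * ((p.2 ! : ℚ)⁻¹ • Y ^ p.2) := by
  rw [derivative_smul, derivative_pow_succ_eq_sum_adPow, smul_sum]
  refine sum_congr rfl fun ⟨i, j⟩ hij => ?_
  rw [HasAntidiagonal.mem_antidiagonal] at hij
  subst hij
  rw [smul_mul_smul_comm, ← Nat.cast_smul_eq_nsmul ℚ, smul_smul,
    show i + j + 1 = i + 1 + j by ring, Nat.cast_add_choose]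
  congr 1
  field_simp

theorem derivative_truncExp {P : Submodule ℚ A[X]} {m N : ℕ} (hP : P ^ m = ⊥) {Y : A[X]}
    (hY : Y ∈ P) (hY' : derivative Y ∈ P) (hmN : m ≤ N) :
    derivative (truncExp m Y) =
      (∑ k ∈ range N, ((k + 1)! : ℚ)⁻¹ • adPow Y k (derivative Y)) * truncExp m Y := by
  have hYm : Y ^ m = 0 := by simpa [hP] using Submodule.pow_mem_pow P hY m
  have hshift : derivative (truncExp m Y) =
      ∑ n ∈ range m, derivative (((n + 1)! : ℚ)⁻¹ • Y ^ (n + 1)) := by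
    have := sum_range_succ' (fun n => derivative ((n ! : ℚ)⁻¹ • Y ^ n)) m
    rw [sum_range_succ, hYm] at this
    simpa [truncExp] using this
  rw [hshift, truncExp, sum_mul_sum]
  simp_rw [derivative_smul_pow_succ_eq_sum]
  refine sum_range_sum_antidiagonal_eq_sum_range_sum_range
    (fun i j => (((i + 1)! : ℚ)⁻¹ • adPow Y i (derivative Y)) * ((j ! : ℚ)⁻¹ • Y ^ j)) hmN
    fun i j hij => ?_
  rw [smul_mul_smul_comm, adPow_mul_pow_eq_zero hP hY hY' (by omega), smul_zero]

end Polynomial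

/-- Under the same nilpotency hypotheses as for the derivative of `e^{X(t)}`, the
inverse exponential satisfies `d/dt e^{-X(t)} = -𝒪_{X(t)}(dX/dt) · e^{-X(t)}`, where
`𝒪_X(Y) = ∑_k (-1)^k (ad_X)^k(Y)/(k+1)!` (all series are finite sums). -/
theorem stmt5 {A : Type*} [Ring A] [Algebra ℚ A] (S : NonUnitalSubalgebra ℚ A) (m : ℕ)
    (hnil : ∀ l : List A, (∀ a ∈ l, a ∈ S) → l.length = m → l.prod = 0)
    (X : Polynomial A) (hX : ∀ j, X.coeff j ∈ S) :
    Polynomial.derivative (∑ k ∈ Finset.range m, ((k.factorial : ℚ))⁻¹ • (-X) ^ k)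
      = -((∑ k ∈ Finset.range (2 * m),
            ((-1 : ℚ) ^ k * (((k + 1).factorial : ℚ))⁻¹) • adPow X k (Polynomial.derivative X)) *
          (∑ k ∈ Finset.range m, ((k.factorial : ℚ))⁻¹ • (-X) ^ k)) := by
  have hP : coeffsIn A S.toSubmodule ^ m = ⊥ := by
    refine le_bot_iff.mp ((coeffsIn_pow_le m).trans ?_)
    rw [Submodule.pow_eq_bot_of_list_prod hnil, coeffsIn_bot]
  have hY : -X ∈ coeffsIn A S.toSubmodule := neg_mem hX
  have key := derivative_truncExp hP hY (derivative_mem_coeffsIn hY) (by omega : m ≤ 2 * m)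
  rw [truncExp] at key
  rw [key, ← neg_mul, ← sum_neg_distrib]
  congr 1
  refine sum_congr rfl fun k _ => ?_
  rw [derivative_neg, adPow_neg_right, adPow_neg_left (R := ℚ), smul_neg, smul_smul, mul_comm]
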